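/- Let G be an aADMG (an ADMG with no bidirected edges) and let G_4' be the graph obtained from an ADMG by replacing every bidirected edge A↔B with A←λ_{AB}→B for fresh nodes λ_{AB}. Then any route in the original ADMG connecting α and β given Z ⊆ V \ {α,β} can be transformed into a route in G_4' connecting α and β given Z by replacing each traversed bidirected edge A↔B with the subroute A←λ_{AB}→B, and this transformed route is Z-connecting. -/

import Mathlib

open scoped Classical
open MeasureTheory ProbabilityTheory

noncomputable section

/-- A mixed graph over a node set `V`, with directed (`dir`), undirected (`undir`)
and bidirected (`bidir`) edges. -/
structure MixedGraph (V : Type*) where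
  dir : V → V → Prop
  undir : V → V → Prop
  bidir : V → V → Prop

namespace MixedGraph

variable {V : Type*}

/-- An ADMG: symmetric undirected/bidirected edges, no self loops, no directed cycles. -/
def WellFormed (G : MixedGraph V) : Prop :=
  (∀ a b, G.undir a b → G.undir b a) ∧
  (∀ a b, G.bidir a b → G.bidir b a) ∧
  (∀ a, ¬ G.dir a a) ∧ (∀ a, ¬ G.undir a a) ∧ (∀ a, ¬ G.bidir a a) ∧
  (∀ a, ¬ Relation.TransGen G.dir a a)

/-- An aADMG has no bidirected edges. -/
def NoBidirected (G : MixedGraph V) : Prop := ∀ a b, ¬ G.bidir a b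

/-- The kind of an edge traversed from left to right along a route. -/
inductive Step : Type
  | fwd | bwd | bi | un
deriving DecidableEq

/-- Validity of traversing from `x` to `y` by a step of the given kind. -/
def StepValid (G : MixedGraph V) (x : V) : Step → V → Prop
  | Step.fwd, y => G.dir x y
  | Step.bwd, y => G.dir y x
  | Step.bi, y => G.bidir x y
  | Step.un, y => G.undir x y

/-- A route between `α` and `β`: a sequence of (not necessarily distinct) nodes
`nodes 0, …, nodes n` consecutively joined by edges. -/
structure Route (G : MixedGraph V) (α β : V) where
  n : ℕ
  npos : 0 < n
  nodes : ℕ → V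
  steps : ℕ → Step
  first : nodes 0 = α
  last : nodes n = β
  valid : ∀ i, i < n → StepValid G (nodes i) (steps i) (nodes (i + 1))

/-- Arrowhead at the right end of a step. -/
def headInto (s : Step) : Prop := s = Step.fwd ∨ s = Step.bi

/-- Arrowhead at the left end of a step. -/
def headOut (s : Step) : Prop := s = Step.bwd ∨ s = Step.bi

variable {G : MixedGraph V} {α β : V}

/-- The interior node at position `i` (with `0 < i < n`) is a collider:
an arrowhead into it on at least one side, and on each side either an
arrowhead into it or an undirected edge. -/
def Route.IsCollider (r : Route G α β) (i : ℕ) : Prop :=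
  (headInto (r.steps (i - 1)) ∨ headOut (r.steps i)) ∧
  (headInto (r.steps (i - 1)) ∨ r.steps (i - 1) = Step.un) ∧
  (headOut (r.steps i) ∨ r.steps i = Step.un)

/-- `a` is an ancestor of the set `Z` (or belongs to it). -/
def Anc (G : MixedGraph V) (Z : Set V) (a : V) : Prop :=
  ∃ z ∈ Z, Relation.ReflTransGen G.dir a z

/-- Path-based connection criterion given `Z`. -/
def Route.PathConnecting (r : Route G α β) (Z : Set V) : Prop :=
  ∀ i, 0 < i → i < r.n →
    (r.IsCollider i → Anc G Z (r.nodes i)) ∧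
    (¬ r.IsCollider i →
      r.nodes i ∉ Z ∨
      (r.steps (i - 1) = Step.un ∧ r.steps i = Step.un ∧
        ((∃ p, G.dir p (r.nodes i) ∧ p ∉ Z) ∨ ∃ s, G.bidir s (r.nodes i))))

/-- Route-based connection criterion given `Z`. -/
def Route.RouteConnecting (r : Route G α β) (Z : Set V) : Prop :=
  ∀ i, 0 < i → i < r.n →
    (r.IsCollider i → r.nodes i ∈ Z) ∧
    (¬ r.IsCollider i →
      r.nodes i ∉ Z ∨
      (r.steps (i - 1) = Step.un ∧ r.steps i = Step.un ∧ ∃ s, G.bidir s (r.nodes i)))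

/-- A route is a path when its nodes are all distinct. -/
def Route.IsPath (r : Route G α β) : Prop :=
  ∀ i j, i ≤ r.n → j ≤ r.n → r.nodes i = r.nodes j → i = j

/-- A directed route from `α` to `β` (all edges directed towards `β`). -/
def Route.AllFwd (r : Route G α β) : Prop := ∀ i, i < r.n → r.steps i = Step.fwd

/-- `X` is separated from `Y` given `Z`: no connecting path between them. -/
def Separated (G : MixedGraph V) (X Y Z : Set V) : Prop :=
  ∀ a ∈ X, ∀ b ∈ Y, ¬ ∃ r : Route G a b, r.IsPath ∧ r.PathConnecting Z

/-- There is an undirected path `a − v₁ − … − vₙ − b` with all `vᵢ ∈ S`, `n ≥ 1`. -/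
def UndirThrough (G : MixedGraph V) (S : Set V) (a b : V) : Prop :=
  ∃ c d, c ∈ S ∧ d ∈ S ∧ G.undir a c ∧ G.undir d b ∧
    Relation.ReflTransGen (fun x y => x ∈ S ∧ y ∈ S ∧ G.undir x y) c d

/-- The intervention of `X` on `G`: delete directed/bidirected edges into `X`,
add undirected shortcuts through `X`, delete undirected edges at `X`. -/
def intervene (G : MixedGraph V) (X : Set V) : MixedGraph V where
  dir a b := G.dir a b ∧ b ∉ X
  bidir a b := G.bidir a b ∧ a ∉ X ∧ b ∉ X
  undir a b := a ∉ X ∧ b ∉ X ∧ (G.undir a b ∨ UndirThrough G X a b)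

/-- Adjacency by an edge of any type. -/
def Adjacent (G : MixedGraph V) (a b : V) : Prop :=
  G.dir a b ∨ G.dir b a ∨ G.undir a b ∨ G.undir b a ∨ G.bidir a b ∨ G.bidir b a

/-- Delete all directed edges into and out of `X`. -/
def dropDirAt (G : MixedGraph V) (X : Set V) : MixedGraph V where
  dir a b := G.dir a b ∧ a ∉ X ∧ b ∉ X
  undir := G.undir
  bidir := G.bidir

/-- Induced subgraph on `W`. -/
def induce (G : MixedGraph V) (W : Set V) : MixedGraph V where
  dir a b := a ∈ W ∧ b ∈ W ∧ G.dir a b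
  undir a b := a ∈ W ∧ b ∈ W ∧ G.undir a b
  bidir a b := a ∈ W ∧ b ∈ W ∧ G.bidir a b

/-- The marginal graph `G^X`: edges among `X`, with undirected edges added for
undirected paths through `Xᶜ`. -/
def marginal (G : MixedGraph V) (X : Set V) : MixedGraph V where
  dir a b := a ∈ X ∧ b ∈ X ∧ G.dir a b
  bidir a b := a ∈ X ∧ b ∈ X ∧ G.bidir a b
  undir a b := a ∈ X ∧ b ∈ X ∧ (G.undir a b ∨ UndirThrough G Xᶜ a b)

/-- `W'` is an ancestral set. -/
def Ancestral (G : MixedGraph V) (W' : Set V) : Prop :=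
  ∀ a b, G.dir a b → b ∈ W' → a ∈ W'

/-- `a` and `b` are joined by an undirected path lying within `W`. -/
def uconnIn (G : MixedGraph V) (W : Set V) (a b : V) : Prop :=
  a ∈ W ∧ b ∈ W ∧ Relation.ReflTransGen (fun x y => x ∈ W ∧ y ∈ W ∧ G.undir x y) a b

/-- `𝒮` is the set of components of `W`: the equivalence classes of
undirected connectivity within the subgraph induced by `W`. -/
def IsComponents (G : MixedGraph V) (W : Set V) (𝒮 : Finset (Finset V)) : Prop :=
  (∀ S ∈ 𝒮, ∃ a ∈ W, ∀ b, b ∈ S ↔ uconnIn G W a b) ∧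
  (∀ a ∈ W, ∃ S ∈ 𝒮, a ∈ S) ∧
  (∀ S ∈ 𝒮, ∀ T ∈ 𝒮, S ≠ T → Disjoint S T)

/-- `L` is a topological order of `W` with respect to the directed part of `G`. -/
def TopOrder [DecidableEq V] (G : MixedGraph V) (W : Set V) (L : List V) : Prop :=
  L.Nodup ∧ (∀ v, v ∈ L ↔ v ∈ W) ∧
  ∀ a b, a ∈ W → b ∈ W → G.dir a b → L.idxOf a < L.idxOf b

/-- The predecessors of `a` in the order `L`. -/
def predSet [DecidableEq V] (L : List V) (a : V) : Set V :=
  {b | b ∈ L ∧ L.idxOf b < L.idxOf a}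

/-- Ancestors of the set `Y` (including `Y`). -/
def AnSet (G : MixedGraph V) (Y : Set V) : Set V :=
  {a | ∃ y ∈ Y, Relation.ReflTransGen G.dir a y}

/-- Descendants of `a` (including `a`). -/
def Desc (G : MixedGraph V) (a b : V) : Prop := Relation.ReflTransGen G.dir a b

/-- The magnification of an ADMG: `A ↔ B` becomes `A ← λ_{AB} → B`,
every `A` gets `ε_A → A`, and `A − B` becomes `ε_A − ε_B`.
Nodes: `Sum.inl a` original, `Sum.inr (Sum.inl a)` is `ε_a`,
`Sum.inr (Sum.inr p)` is `λ_p`. -/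
def magnify (G : MixedGraph V) : MixedGraph (V ⊕ (V ⊕ Sym2 V)) where
  dir x y :=
    match x, y with
    | Sum.inl a, Sum.inl b => G.dir a b
    | Sum.inr (Sum.inl a), Sum.inl b => a = b
    | Sum.inr (Sum.inr p), Sum.inl b => ∃ c, p = s(b, c) ∧ G.bidir b c
    | _, _ => False
  undir x y :=
    match x, y with
    | Sum.inr (Sum.inl a), Sum.inr (Sum.inl b) => G.undir a b
    | _, _ => False
  bidir _ _ := False

/-- Replacing each bidirected edge `A ↔ B` with `A ← λ_{AB} → B` only. -/
def magBi (G : MixedGraph V) : MixedGraph (V ⊕ Sym2 V) where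
  dir x y :=
    match x, y with
    | Sum.inl a, Sum.inl b => G.dir a b
    | Sum.inr p, Sum.inl b => ∃ c, p = s(b, c) ∧ G.bidir b c
    | _, _ => False
  undir x y :=
    match x, y with
    | Sum.inl a, Sum.inl b => G.undir a b
    | _, _ => False
  bidir _ _ := False

/-- The back-door criterion of the set `S` relative to `(Xs, Ys)`:
`S` contains no descendant of `Xs` and blocks every non-directed path
from `Xs` to `Ys`. -/
def BackDoor (G : MixedGraph V) (S Xs Ys : Set V) : Prop :=
  (∀ a ∈ Xs, ∀ v ∈ S, ¬ Desc G a v) ∧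
  (∀ a ∈ Xs, ∀ b ∈ Ys, ∀ r : Route G a b, r.IsPath → ¬ r.AllFwd →
    ¬ r.PathConnecting S)

section SEM

variable [Fintype V]

/-- Integral over assignments of real values to the coordinates in `S`. -/
def intOver (S : Set V) (g : ((↥S) → ℝ) → ℝ) : ℝ :=
  letI : Fintype ↥S := Fintype.ofFinite _
  ∫ z : (↥S) → ℝ, g z

/-- Marginal density over the coordinates in `S`: integrate out `Sᶜ`. -/
def marg (p : (V → ℝ) → ℝ) (S : Set V) (x : V → ℝ) : ℝ :=
  intOver (Sᶜ) (fun y => p (fun v => if h : v ∈ Sᶜ then y ⟨v, h⟩ else x v))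

/-- Override the assignment `x` on `S` by `z`. -/
def ovr (x : V → ℝ) (S : Set V) (z : (↥S) → ℝ) : V → ℝ :=
  fun v => if h : v ∈ S then z ⟨v, h⟩ else x v

/-- Multivariate Gaussian density with mean 0 and precision matrix `Sinv`. -/
def gaussDensity (Sinv : Matrix V V ℝ) (u : V → ℝ) : ℝ :=
  Real.sqrt (Sinv.det / (2 * Real.pi) ^ (Fintype.card V)) *
    Real.exp (-(∑ i, ∑ j, u i * Sinv i j * u j) / 2)

/-- A causal model of an aADMG `G`: structural equations `A = f_A(Pa(A)) + ε_A`
with jointly Gaussian errors whose precision matrix has zeros for missing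
undirected edges. -/
structure GaussSEM (G : MixedGraph V) where
  f : V → (V → ℝ) → ℝ
  f_parents : ∀ A x y, (∀ B, G.dir B A → x B = y B) → f A x = f A y
  Sinv : Matrix V V ℝ
  symm : Sinv.IsSymm
  posdef : Sinv.PosDef
  zeros : ∀ A B, A ≠ B → ¬ G.undir A B → Sinv A B = 0

namespace GaussSEM

variable {G : MixedGraph V} (M : GaussSEM G)

/-- Error density. -/
def q : (V → ℝ) → ℝ := gaussDensity M.Sinv

/-- Error values recovered from an assignment. -/
def errs (x : V → ℝ) : V → ℝ := fun i => x i - M.f i x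

/-- Observational joint density over `V`. -/
def obs (x : V → ℝ) : ℝ := M.q (M.errs x)

/-- Observational conditional density `p(A | B)`. -/
def cond (A B : Set V) (x : V → ℝ) : ℝ :=
  marg M.obs (A ∪ B) x / marg M.obs B x

/-- Post-interventional density of `V \ Xset` under `do(Xset := x on Xset)`:
the errors of the intervened variables are marginalized out. -/
def doDensity (Xset : Set V) (x : V → ℝ) : ℝ :=
  marg M.q (Xsetᶜ) (M.errs x)

/-- Post-interventional conditional density `p(A | do(Xset), B)`. -/
def doCond (Xset A B : Set V) (x : V → ℝ) : ℝ :=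
  marg (M.doDensity Xset) (Xset ∪ A ∪ B) x / marg (M.doDensity Xset) (Xset ∪ B) x

/-- Conditional density of the errors in `A` given the errors in `B`. -/
def qcond (A B : Set V) (u : V → ℝ) : ℝ :=
  marg M.q (A ∪ B) u / marg M.q B u

/-- The factor `Q(S | W')`: conditional density of the errors of `S` given the
errors of `W'`, evaluated at the errors recovered from the assignment. -/
def QFactor (S W' : Set V) (x : V → ℝ) : ℝ := M.qcond S W' (M.errs x)

end GaussSEM

/-- A causal effect (a functional of the model) is identifiable when it is a
fixed functional of the observational density, uniformly over all models of `G`. -/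
def Identifiable (G : MixedGraph V) (eff : GaussSEM G → (V → ℝ) → ℝ) : Prop :=
  ∃ F : ((V → ℝ) → ℝ) → (V → ℝ) → ℝ, ∀ M : GaussSEM G, eff M = F M.obs

end SEM

end MixedGraph

/-!
Replace every step of the route by its subroute in `magBi G` (a bidirected step `A ↔ B` by
`A ← λ_{AB} → B`) and concatenate. The subroutes end with the same arrowheads as the steps they
replace, so an old node is a collider on the new route exactly when it was one on the old route,
and each new node `λ_{AB}` is a non-collider outside `Z`. The one node that stops passing is a
non-collider `C ∈ Z` on `A − C − B` that passed only because `C` has a spouse `S`; before `C`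
is left we insert the detour `C ← λ_{CS} → C`, on which both copies of `C` are colliders
in `Z`.
-/

namespace MixedGraph

variable {V : Type*}

def Step.IsCollider (s t : Step) : Prop :=
  (headInto s ∨ headOut t) ∧ (headInto s ∨ s = Step.un) ∧ (headOut t ∨ t = Step.un)

/-- The node `v`, entered by step `s` and left by step `t`, does not block a route given `Z`. -/
def Transmits (G : MixedGraph V) (Z : Set V) (s : Step) (v : V) (t : Step) : Prop :=
  (s.IsCollider t → v ∈ Z) ∧
  (¬ s.IsCollider t → v ∉ Z ∨ (s = Step.un ∧ t = Step.un ∧ ∃ x, G.bidir x v))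

section Routes

variable {G : MixedGraph V} {Z : Set V} {a b c x y : V}

theorem transmits_of_isCollider {s t : Step} (h : s.IsCollider t) (hv : x ∈ Z) :
    G.Transmits Z s x t :=
  ⟨fun _ => hv, fun hn => absurd h hn⟩

theorem transmits_of_not_isCollider {s t : Step} (h : ¬ s.IsCollider t) (hv : x ∉ Z) :
    G.Transmits Z s x t :=
  ⟨fun hc => absurd hc h, fun _ => Or.inl hv⟩

theorem Route.routeConnecting_iff (r : Route G a b) :
    r.RouteConnecting Z ↔
      ∀ i, 0 < i → i < r.n → G.Transmits Z (r.steps (i - 1)) (r.nodes i) (r.steps i) :=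
  Iff.rfl

def Route.ofStep {s : Step} (h : StepValid G x s y) : Route G x y where
  n := 1
  npos := one_pos
  nodes i := if i = 0 then x else y
  steps _ := s
  first := if_pos rfl
  last := if_neg one_ne_zero
  valid i hi := by
    obtain rfl : i = 0 := by omega
    simpa using h

theorem Route.routeConnecting_ofStep {s : Step} (h : StepValid G x s y) :
    (Route.ofStep h).RouteConnecting Z := fun i hi hi' => by
  simp only [ofStep] at hi'
  omega

def Route.append (r₁ : Route G a b) (r₂ : Route G b c) : Route G a c where
  n := r₁.n + r₂.n
  npos := Nat.add_pos_left r₁.npos _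
  nodes i := if i ≤ r₁.n then r₁.nodes i else r₂.nodes (i - r₁.n)
  steps i := if i < r₁.n then r₁.steps i else r₂.steps (i - r₁.n)
  first := by simp [r₁.first]
  last := by
    have := r₂.npos
    simp [show ¬ r₁.n + r₂.n ≤ r₁.n by omega, r₂.last]
  valid i hi := by
    by_cases h : i < r₁.n
    · simpa [h, h.le, Nat.succ_le_of_lt h] using r₁.valid i h
    · obtain ⟨j, rfl⟩ := Nat.exists_eq_add_of_le (not_lt.1 h)
      have hj : r₁.n + j + 1 - r₁.n = j + 1 := by omega
      rcases Nat.eq_zero_or_pos j with rfl | hj0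
      · simpa [hj, r₁.last, r₂.first] using r₂.valid 0 (by omega)
      · simpa [show ¬ r₁.n + j ≤ r₁.n by omega, hj] using r₂.valid j (by omega)

section Append

variable (r₁ : Route G a b) (r₂ : Route G b c)

theorem Route.append_steps_of_lt {i : ℕ} (h : i < r₁.n) :
    (r₁.append r₂).steps i = r₁.steps i := if_pos h

theorem Route.append_steps_add (j : ℕ) :
    (r₁.append r₂).steps (r₁.n + j) = r₂.steps j := by
  simp [append]

theorem Route.append_nodes_of_le {i : ℕ} (h : i ≤ r₁.n) :
    (r₁.append r₂).nodes i = r₁.nodes i := if_pos h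

theorem Route.append_nodes_add (j : ℕ) :
    (r₁.append r₂).nodes (r₁.n + j) = r₂.nodes j := by
  rcases Nat.eq_zero_or_pos j with rfl | hj
  · simp [append, r₁.last, r₂.first]
  · simp [append, show ¬ r₁.n + j ≤ r₁.n by omega]

theorem Route.append_steps_zero : (r₁.append r₂).steps 0 = r₁.steps 0 :=
  r₁.append_steps_of_lt r₂ r₁.npos

theorem Route.append_steps_last :
    (r₁.append r₂).steps ((r₁.append r₂).n - 1) = r₂.steps (r₂.n - 1) := by
  have := r₂.npos
  rw [show (r₁.append r₂).n - 1 = r₁.n + (r₂.n - 1) by simp [append]; omega,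
    append_steps_add]

variable {r₁ r₂}

theorem Route.RouteConnecting.append (h₁ : r₁.RouteConnecting Z) (h₂ : r₂.RouteConnecting Z)
    (hb : G.Transmits Z (r₁.steps (r₁.n - 1)) b (r₂.steps 0)) :
    (r₁.append r₂).RouteConnecting Z := by
  rw [Route.routeConnecting_iff] at h₁ h₂ ⊢
  intro i hi0 hin
  rcases lt_trichotomy i r₁.n with hlt | rfl | hgt
  · rw [r₁.append_steps_of_lt r₂ (by omega), r₁.append_steps_of_lt r₂ hlt,
      r₁.append_nodes_of_le r₂ hlt.le]
    exact h₁ i hi0 hlt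
  · rw [r₁.append_steps_of_lt r₂ (by omega), r₁.append_nodes_of_le r₂ le_rfl, r₁.last,
      ← add_zero r₁.n, append_steps_add, add_zero]
    exact hb
  · obtain ⟨j, rfl⟩ := Nat.exists_eq_add_of_lt hgt
    rw [show r₁.n + j + 1 - 1 = r₁.n + j by omega, add_assoc, append_steps_add,
      append_nodes_add, append_steps_add]
    exact h₂ (j + 1) (by omega) (by simp only [Route.append] at hin; omega)

end Append

theorem exists_routeConnecting_fork {p : V} (hx : G.dir p x) (hy : G.dir p y) (hp : p ∉ Z) :
    ∃ P : Route G x y, P.RouteConnecting Z ∧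
      P.steps 0 = Step.bwd ∧ P.steps (P.n - 1) = Step.fwd := by
  have hx' : StepValid G x Step.bwd p := hx
  have hy' : StepValid G p Step.fwd y := hy
  refine ⟨(Route.ofStep hx').append (Route.ofStep hy'), ?_, rfl, rfl⟩
  refine (Route.routeConnecting_ofStep hx').append (Route.routeConnecting_ofStep hy') ?_
  exact transmits_of_not_isCollider (by simp [Route.ofStep, Step.IsCollider, headInto, headOut])
    hp

theorem exists_routeConnecting_of_chain {n : ℕ} (hn : 0 < n) (f : ℕ → V)
    (first last : ℕ → Step)
    (hpiece : ∀ k < n, ∃ P : Route G (f k) (f (k + 1)), P.RouteConnecting Z ∧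
      P.steps 0 = first k ∧ P.steps (P.n - 1) = last k)
    (hjoin : ∀ k, k + 1 < n → G.Transmits Z (last k) (f (k + 1)) (first (k + 1))) :
    ∃ R : Route G (f 0) (f n), R.RouteConnecting Z := by
  suffices h : ∀ m < n, ∃ R : Route G (f 0) (f (m + 1)), R.RouteConnecting Z ∧
      R.steps (R.n - 1) = last m by
    obtain ⟨R, hR, -⟩ := h (n - 1) (by omega)
    rw [← Nat.sub_add_cancel hn]
    exact ⟨R, hR⟩
  intro m
  induction m with
  | zero =>
    intro h0
    obtain ⟨P, hP, -, hlast⟩ := hpiece 0 h0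
    exact ⟨P, hP, hlast⟩
  | succ m ih =>
    intro hm
    obtain ⟨R, hR, hRlast⟩ := ih (by omega)
    obtain ⟨P, hP, hPfirst, hPlast⟩ := hpiece (m + 1) hm
    refine ⟨R.append P, hR.append hP ?_, by rw [R.append_steps_last, hPlast]⟩
    rw [hRlast, hPfirst]
    exact hjoin m hm

end Routes

/-- First step of the subroute of `magBi G` that replaces a step of `G`. -/
def Step.magBiFirst : Step → Step
  | Step.bi => Step.bwd
  | s => s

def Step.magBiLast : Step → Step
  | Step.bi => Step.fwd
  | s => s

theorem Step.isCollider_magBiLast_magBiFirst (s t : Step) :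
    s.magBiLast.IsCollider t.magBiFirst ↔ s.IsCollider t := by
  cases s <;> cases t <;> simp [IsCollider, magBiLast, magBiFirst, headInto, headOut]

section MagBi

variable {G : MixedGraph V} {Z : Set V} {x y α β : V}

theorem magBi_dir_lambda (hsymm : ∀ a b, G.bidir a b → G.bidir b a) (h : G.bidir x y) :
    (magBi G).dir (Sum.inr s(x, y)) (Sum.inl y) :=
  ⟨x, Sym2.eq_swap, hsymm x y h⟩

theorem exists_magBi_route_of_stepValid (hsymm : ∀ a b, G.bidir a b → G.bidir b a)
    {s : Step} (h : StepValid G x s y) :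
    ∃ P : Route (magBi G) (Sum.inl x) (Sum.inl y), P.RouteConnecting (Sum.inl '' Z) ∧
      P.steps 0 = s.magBiFirst ∧ P.steps (P.n - 1) = s.magBiLast := by
  cases s
  case bi =>
    have hx : (magBi G).dir (Sum.inr s(x, y)) (Sum.inl x) := ⟨y, rfl, h⟩
    exact exists_routeConnecting_fork hx (magBi_dir_lambda hsymm h) (by simp)
  case fwd =>
    exact ⟨Route.ofStep (G := magBi G) (s := .fwd) h, Route.routeConnecting_ofStep _, rfl, rfl⟩
  case bwd =>
    exact ⟨Route.ofStep (G := magBi G) (s := .bwd) h, Route.routeConnecting_ofStep _, rfl, rfl⟩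
  case un =>
    exact ⟨Route.ofStep (G := magBi G) (s := .un) h, Route.routeConnecting_ofStep _, rfl, rfl⟩

/-- A non-collider `C ∈ Z` with `A − C − B` and a spouse blocks in `magBi G`; the route is
rerouted through the collider detour `C ← λ → C`. -/
def Route.NeedsDetour (r : Route G α β) (Z : Set V) (k : ℕ) : Prop :=
  r.steps (k - 1) = Step.un ∧ r.steps k = Step.un ∧ r.nodes k ∈ Z ∧
    ∃ s, G.bidir s (r.nodes k)

/-- First step of the subroute of `magBi G` that replaces step `k` of `r`, detour included. -/
def Route.magBiFirst (r : Route G α β) (Z : Set V) (k : ℕ) : Step :=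
  if r.NeedsDetour Z k then Step.bwd else (r.steps k).magBiFirst

theorem Route.exists_magBi_piece (hsymm : ∀ a b, G.bidir a b → G.bidir b a)
    (r : Route G α β) {k : ℕ} (hk : k < r.n) :
    ∃ P : Route (magBi G) (Sum.inl (r.nodes k)) (Sum.inl (r.nodes (k + 1))),
      P.RouteConnecting (Sum.inl '' Z) ∧
      P.steps 0 = r.magBiFirst Z k ∧ P.steps (P.n - 1) = (r.steps k).magBiLast := by
  obtain ⟨Q, hQ, hQfirst, hQlast⟩ :=
    exists_magBi_route_of_stepValid (Z := Z) hsymm (r.valid k hk)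
  by_cases hd : r.NeedsDetour Z k
  · obtain ⟨hun₀, hun, hZ, s, hs⟩ := hd
    have hlam := magBi_dir_lambda hsymm hs
    obtain ⟨D, hD, hDfirst, hDlast⟩ :=
      exists_routeConnecting_fork (Z := Sum.inl '' Z) hlam hlam (by simp)
    refine ⟨D.append Q, hD.append hQ ?_, ?_, by rw [D.append_steps_last, hQlast]⟩
    · rw [hDlast, hQfirst, hun]
      exact transmits_of_isCollider (by simp [Step.IsCollider, Step.magBiFirst, headInto])
        (Sum.inl_injective.mem_set_image.2 hZ)
    · rw [D.append_steps_zero, hDfirst, Route.magBiFirst, if_pos ⟨hun₀, hun, hZ, s, hs⟩]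
  · exact ⟨Q, hQ, by rw [hQfirst, Route.magBiFirst, if_neg hd], hQlast⟩

theorem Route.RouteConnecting.transmits_magBi {r : Route G α β} (hr : r.RouteConnecting Z)
    {k : ℕ} (hk : k + 1 < r.n) :
    (magBi G).Transmits (Sum.inl '' Z) (r.steps k).magBiLast (Sum.inl (r.nodes (k + 1)))
      (r.magBiFirst Z (k + 1)) := by
  have hconn := (r.routeConnecting_iff.1 hr) (k + 1) (Nat.succ_pos k) hk
  rw [Nat.add_sub_cancel] at hconn
  by_cases hd : r.NeedsDetour Z (k + 1)
  · rw [Route.magBiFirst, if_pos hd]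
    obtain ⟨hun, -, hZ, -⟩ := hd
    rw [Nat.add_sub_cancel] at hun
    rw [hun]
    exact transmits_of_isCollider (by simp [Step.IsCollider, Step.magBiLast, headOut])
      (Sum.inl_injective.mem_set_image.2 hZ)
  · rw [Route.magBiFirst, if_neg hd]
    obtain ⟨hcol, hncol⟩ := hconn
    simp only [Transmits, Step.isCollider_magBiLast_magBiFirst, Sum.inl_injective.mem_set_image]
    refine ⟨hcol, fun hnc => Or.inl fun hZ => ?_⟩
    obtain hnZ | ⟨hun₁, hun₂, hsp⟩ := hncol hnc
    · exact hnZ hZ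
    · exact hd ⟨by rwa [Nat.add_sub_cancel], hun₂, hZ, hsp⟩

end MagBi

end MixedGraph

open MixedGraph in
theorem route_connecting_magBi_general
    {V : Type*} (G : MixedGraph V) (hG : G.WellFormed)
    (α β : V) (Z : Set V)
    (r : Route G α β) (hr : r.RouteConnecting Z) :
    ∃ r' : Route (magBi G) (Sum.inl α) (Sum.inl β),
      r'.RouteConnecting (Sum.inl '' Z) := by
  have h := exists_routeConnecting_of_chain r.npos (fun k => Sum.inl (r.nodes k))
    (r.magBiFirst Z) (fun k => (r.steps k).magBiLast)
    (fun _ hk => r.exists_magBi_piece hG.2.1 hk) (fun _ hk => hr.transmits_magBi hk)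
  rwa [r.first, r.last] at h

open MixedGraph in
/-- A connecting route in an ADMG transforms into a connecting route in the
graph obtained by replacing each bidirected edge `A ↔ B` with `A ← λ_{AB} → B`. -/
theorem route_connecting_magBi
    {V : Type*} [Fintype V] (G : MixedGraph V) (hG : G.WellFormed)
    (α β : V) (Z : Set V) (hα : α ∉ Z) (hβ : β ∉ Z)
    (r : Route G α β) (hr : r.RouteConnecting Z) :
    ∃ r' : Route (magBi G) (Sum.inl α) (Sum.inl β),
      r'.RouteConnecting (Sum.inl '' Z) :=
  route_connecting_magBi_general G hG α β Z r hr
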